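/- Let ψ: ℕ → (0,1] be a function with liminf_{q→∞}(−log ψ(q))/log q > 1. Then there exists q₀ ∈ ℕ such that ψ(q) < 1/q for all q > q₀, and the set L(ψ) equals the limsup over the countable family of Lüroth rational data (P_k, Q_k, d_k) of the intervals (P_k/Q_k, P_k/Q_k + ψ(Q_k)/Q_k). -/

import Mathlib

open MeasureTheory Filter Set

/-- The Lüroth map `T(x) = ⌊1/x⌋(⌊1/x + 1⌋x − 1)`. -/
noncomputable def lurothT (x : ℝ) : ℝ :=
  (⌊x⁻¹⌋ : ℝ) * (((⌊x⁻¹⌋ : ℝ) + 1) * x - 1)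

/-- The `n`-th Lüroth digit (1-indexed): `d_n(x) = ⌊1/(T^{n-1}x)⌋ + 1`. -/
noncomputable def lurothD (x : ℝ) (n : ℕ) : ℕ :=
  ⌊(lurothT^[n - 1] x)⁻¹⌋₊ + 1

/-- The (unsimplified) denominator `Q_n(x) = d_n ∏_{j=1}^{n-1} d_j(d_j−1)`. -/
noncomputable def lurothQ (x : ℝ) (n : ℕ) : ℕ :=
  lurothD x n * ∏ j ∈ Finset.Ico 1 n, lurothD x j * (lurothD x j - 1)

/-- The `n`-th Lüroth convergent `P_n(x)/Q_n(x) = ∑_{k=1}^n 1/Q_k(x)`. -/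
noncomputable def lurothConv (x : ℝ) (n : ℕ) : ℝ :=
  ∑ k ∈ Finset.Icc 1 n, ((lurothQ x k : ℝ))⁻¹

/-- The (unsimplified) numerator `P_n(x)`. -/
noncomputable def lurothP (x : ℝ) (n : ℕ) : ℝ := lurothConv x n * (lurothQ x n : ℝ)

/-- Lüroth `ψ`-well approximable numbers. -/
def Lpsi (ψ : ℕ → ℝ) : Set ℝ :=
  {x ∈ Set.Ioc (0:ℝ) 1 | ∀ N : ℕ, ∃ n, N ≤ n ∧ 1 ≤ n ∧
    |x - lurothConv x n| < ψ (lurothQ x n) / (lurothQ x n : ℝ)}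

/-- Lüroth `τ`-well approximable numbers. -/
noncomputable def Ltau (τ : ℝ) : Set ℝ :=
  {x ∈ Set.Ioc (0:ℝ) 1 | ∀ N : ℕ, ∃ n, N ≤ n ∧ 1 ≤ n ∧
    |x - lurothConv x n| < ((lurothQ x n : ℝ)) ^ (-(1 + τ))}

/-!
Write `x ∈ (0, 1]` with Lüroth digits `d₁, d₂, …` as `x = P_n/Q_n + Tⁿx / ∏_{j ≤ n} d_j (d_j - 1)`
with `Tⁿx ∈ (0, 1]`. Hence the points whose first `n` digits are `d₁, …, d_n` form exactly the
cylinder `(P_n/Q_n, P_n/Q_n + 1/((d_n - 1) Q_n)]`. The liminf condition gives `ψ q < 1/q` for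
large `q`, and `1/Q² ≤ 1/((d_n - 1) Q)`, so for large `Q` each interval `(P/Q, P/Q + ψ(Q)/Q)`
lies in the cylinder of its datum: every point of it has `P/Q` as its `n`-th Lüroth convergent.
-/

lemma lurothD_one (y : ℝ) : lurothD y 1 = ⌊y⁻¹⌋₊ + 1 := rfl

lemma lurothD_succ (x : ℝ) (n : ℕ) : lurothD x (n + 1) = lurothD (lurothT^[n] x) 1 := rfl

lemma lurothT_eq {y : ℝ} (hy : 0 < y) :
    lurothT y = ((lurothD y 1 : ℝ) - 1) * (lurothD y 1 * y - 1) := by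
  rw [lurothT, lurothD_one, ← natCast_floor_eq_intCast_floor (inv_nonneg.2 hy.le)]
  push_cast
  ring

lemma lurothD_one_bounds {y : ℝ} (hy : 0 < y) :
    ((lurothD y 1 : ℝ) - 1) * y ≤ 1 ∧ 1 < lurothD y 1 * y := by
  have hle := Nat.floor_le (inv_nonneg.2 hy.le)
  have hlt := Nat.lt_floor_add_one y⁻¹
  rw [lurothD_one, Nat.cast_add_one, add_sub_cancel_right]
  constructor
  · calc (⌊y⁻¹⌋₊ : ℝ) * y ≤ y⁻¹ * y := by gcongr
      _ = 1 := inv_mul_cancel₀ hy.ne'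
  · calc 1 = y⁻¹ * y := (inv_mul_cancel₀ hy.ne').symm
      _ < _ := by gcongr

lemma lurothD_one_eq_of_mem_Ioc {y : ℝ} {d : ℕ} (hd : 2 ≤ d)
    (hy : y ∈ Ioc (d : ℝ)⁻¹ ((d : ℝ) - 1)⁻¹) : lurothD y 1 = d := by
  have hd' : (2 : ℝ) ≤ d := by exact_mod_cast hd
  have hy0 : 0 < y := lt_trans (by positivity) hy.1
  have hfloor : ⌊y⁻¹⌋₊ = d - 1 := by
    rw [Nat.floor_eq_iff (by positivity), Nat.cast_sub (by omega), Nat.cast_one, sub_add_cancel]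
    exact ⟨le_inv_of_le_inv₀ hy0 hy.2, inv_lt_of_inv_lt₀ (by positivity) hy.1⟩
  rw [lurothD_one, hfloor]
  omega

lemma two_le_lurothD_one {y : ℝ} (hy : y ∈ Ioc (0 : ℝ) 1) : 2 ≤ lurothD y 1 :=
  Nat.succ_le_succ (Nat.le_floor (by simpa using one_le_inv_iff₀.2 hy))

lemma lurothT_mem_Ioc {y : ℝ} (hy : y ∈ Ioc (0 : ℝ) 1) : lurothT y ∈ Ioc (0 : ℝ) 1 := by
  obtain ⟨hle, hlt⟩ := lurothD_one_bounds hy.1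
  have hD : (2 : ℝ) ≤ lurothD y 1 := by exact_mod_cast two_le_lurothD_one hy
  rw [lurothT_eq hy.1]
  constructor <;> nlinarith

lemma lurothT_iterate_mem_Ioc {x : ℝ} (hx : x ∈ Ioc (0 : ℝ) 1) (n : ℕ) :
    lurothT^[n] x ∈ Ioc (0 : ℝ) 1 := by
  induction n with
  | zero => exact hx
  | succ n ih => rw [Function.iterate_succ_apply']; exact lurothT_mem_Ioc ih

lemma two_le_lurothD {x : ℝ} (hx : x ∈ Ioc (0 : ℝ) 1) (n : ℕ) : 2 ≤ lurothD x n :=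
  two_le_lurothD_one (lurothT_iterate_mem_Ioc hx (n - 1))

lemma eq_inv_lurothD_add_lurothT {y : ℝ} (hy : y ∈ Ioc (0 : ℝ) 1) :
    y = (lurothD y 1 : ℝ)⁻¹ + lurothT y / ((lurothD y 1 : ℝ) * ((lurothD y 1 : ℝ) - 1)) := by
  have hD : (2 : ℝ) ≤ lurothD y 1 := by exact_mod_cast two_le_lurothD_one hy
  rw [lurothT_eq hy.1]
  field_simp [show (lurothD y 1 : ℝ) - 1 ≠ 0 by linarith]
  ring

lemma mem_Ioc_add_div_iff {a b c x P : ℝ} (hP : 0 < P) :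
    x ∈ Ioc (c + a / P) (c + b / P) ↔ (x - c) * P ∈ Ioc a b := by
  simp only [mem_Ioc, ← lt_sub_iff_add_lt', ← sub_le_iff_le_add', div_lt_iff₀ hP, le_div_iff₀ hP]

lemma eventually_lt_one_div_of_one_lt_liminf {ψ : ℕ → ℝ} (hψ : ∀ q, ψ q ∈ Ioc (0 : ℝ) 1)
    (h : 1 < liminf (fun q : ℕ => -Real.log (ψ q) / Real.log q) atTop) :
    ∀ᶠ q : ℕ in atTop, ψ q < 1 / q := by
  have hbdd : IsBoundedUnder (· ≥ ·) atTop fun q : ℕ => -Real.log (ψ q) / Real.log q :=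
    isBoundedUnder_of_eventually_ge <| Eventually.of_forall fun q =>
      div_nonneg (neg_nonneg.2 (Real.log_nonpos (hψ q).1.le (hψ q).2)) (Real.log_natCast_nonneg q)
  filter_upwards [eventually_lt_of_lt_liminf h hbdd, eventually_gt_atTop 1] with q hq hq1
  have hq_pos : (0 : ℝ) < q := by positivity
  rw [one_lt_div (Real.log_pos (by exact_mod_cast hq1)), ← Real.log_inv,
    Real.log_lt_log_iff hq_pos (inv_pos.2 (hψ q).1)] at hq
  exact (lt_one_div (hψ q).1 hq_pos).2 (by rwa [one_div])

namespace Luroth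

/- For an arbitrary digit sequence `d`, `denom d n` is `Q_n` and `conv d n` is `P_n / Q_n`;
`scale d n = (d_n - 1) Q_n` and `cylinder d n` is the set of `x` whose first `n` digits are
`d₁, …, d_n`. -/

def denom (d : ℕ → ℕ) (n : ℕ) : ℕ := d n * ∏ j ∈ Finset.Ico 1 n, d j * (d j - 1)

def scale (d : ℕ → ℕ) (n : ℕ) : ℕ := ∏ j ∈ Finset.Icc 1 n, d j * (d j - 1)

noncomputable def conv (d : ℕ → ℕ) (n : ℕ) : ℝ := ∑ k ∈ Finset.Icc 1 n, (denom d k : ℝ)⁻¹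

def cylinder (d : ℕ → ℕ) (n : ℕ) : Set ℝ := Ioc (conv d n) (conv d n + (scale d n : ℝ)⁻¹)

variable {d e : ℕ → ℕ} {n : ℕ} {x : ℝ}

lemma denom_succ (d : ℕ → ℕ) (n : ℕ) : denom d (n + 1) = d (n + 1) * scale d n := by
  rw [denom, scale, Finset.Ico_add_one_right_eq_Icc]

lemma scale_succ (d : ℕ → ℕ) (n : ℕ) :
    scale d (n + 1) = scale d n * (d (n + 1) * (d (n + 1) - 1)) := by
  rw [scale, ← Finset.Ico_add_one_right_eq_Icc, Finset.prod_Ico_succ_top (by omega),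
    Finset.Ico_add_one_right_eq_Icc, scale]

lemma conv_succ (d : ℕ → ℕ) (n : ℕ) : conv d (n + 1) = conv d n + (denom d (n + 1) : ℝ)⁻¹ := by
  rw [conv, ← Finset.Ico_add_one_right_eq_Icc, Finset.sum_Ico_succ_top (by omega),
    Finset.Ico_add_one_right_eq_Icc, conv]

lemma scale_eq_denom_mul (hn : 1 ≤ n) : scale d n = denom d n * (d n - 1) := by
  obtain ⟨m, rfl⟩ := Nat.exists_eq_add_of_le' hn
  rw [scale_succ, denom_succ]
  ring

lemma scale_pos (hd : ∀ i ∈ Finset.Icc 1 n, 2 ≤ d i) : 0 < scale d n :=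
  Finset.prod_pos fun i hi => have := hd i hi; Nat.mul_pos (by omega) (by omega)

lemma two_pow_le_denom (hn : 1 ≤ n) (hd : ∀ i ∈ Finset.Icc 1 n, 2 ≤ d i) : 2 ^ n ≤ denom d n := by
  obtain ⟨m, rfl⟩ := Nat.exists_eq_add_of_le' hn
  have hscale : 2 ^ m ≤ scale d m := by
    simpa [scale] using Finset.pow_card_le_prod (Finset.Icc 1 m) _ 2 fun i hi => by
      have := hd i (Finset.Icc_subset_Icc_right m.le_succ hi)
      exact le_trans (by omega) (Nat.mul_le_mul_left (d i) (show 1 ≤ d i - 1 by omega))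
  rw [denom_succ, pow_succ']
  exact Nat.mul_le_mul (hd (m + 1) (by simp)) hscale

lemma scale_le_denom_sq (hn : 1 ≤ n) (hd : ∀ i ∈ Finset.Icc 1 n, 2 ≤ d i) :
    scale d n ≤ denom d n ^ 2 := by
  have hdn_le : d n ≤ denom d n :=
    Nat.le_mul_of_pos_right _ (Finset.prod_pos fun i hi => by
      have := hd i (Finset.Ico_subset_Icc_self hi); exact Nat.mul_pos (by omega) (by omega))
  rw [scale_eq_denom_mul hn, sq]
  exact Nat.mul_le_mul_left _ (by omega)

lemma denom_congr (hn : 1 ≤ n) (h : ∀ i ∈ Finset.Icc 1 n, d i = e i) : denom d n = denom e n := by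
  rw [denom, denom, h n (Finset.right_mem_Icc.2 hn)]
  exact congrArg _ (Finset.prod_congr rfl fun j hj => by rw [h j (Finset.Ico_subset_Icc_self hj)])

lemma scale_congr (h : ∀ i ∈ Finset.Icc 1 n, d i = e i) : scale d n = scale e n :=
  Finset.prod_congr rfl fun j hj => by rw [h j hj]

lemma conv_congr (h : ∀ i ∈ Finset.Icc 1 n, d i = e i) : conv d n = conv e n :=
  Finset.sum_congr rfl fun k hk => by
    rw [denom_congr (Finset.mem_Icc.1 hk).1 fun i hi =>
      h i (Finset.Icc_subset_Icc_right (Finset.mem_Icc.1 hk).2 hi)]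

lemma cast_scale_succ (h : 1 ≤ d (n + 1)) :
    (scale d (n + 1) : ℝ) = scale d n * ((d (n + 1) : ℝ) * ((d (n + 1) : ℝ) - 1)) := by
  rw [scale_succ, Nat.cast_mul, Nat.cast_mul, Nat.cast_sub h, Nat.cast_one]

lemma eq_conv_add_lurothT_iterate_div_scale (hx : x ∈ Ioc (0 : ℝ) 1) (n : ℕ) :
    x = conv (lurothD x) n + lurothT^[n] x / scale (lurothD x) n := by
  induction n with
  | zero => simp [conv, scale]
  | succ n ih =>
    have hstep := eq_inv_lurothD_add_lurothT (lurothT_iterate_mem_Ioc hx n)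
    rw [← lurothD_succ] at hstep
    rw [conv_succ, denom_succ, cast_scale_succ (one_le_two.trans (two_le_lurothD hx (n + 1))),
      Function.iterate_succ_apply', Nat.cast_mul, div_mul_eq_div_div_swap]
    linear_combination ih + hstep / (scale (lurothD x) n : ℝ)

lemma conv_lurothD_lt (hx : x ∈ Ioc (0 : ℝ) 1) (n : ℕ) : conv (lurothD x) n < x := by
  have hP : (0 : ℝ) < scale (lurothD x) n := by
    exact_mod_cast scale_pos fun i _ => two_le_lurothD hx i
  have hT := (lurothT_iterate_mem_Ioc hx n).1
  conv_rhs => rw [eq_conv_add_lurothT_iterate_div_scale hx n]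
  exact lt_add_of_pos_right _ (div_pos hT hP)

lemma mem_cylinder_iff (hP : 0 < scale d n) :
    x ∈ cylinder d n ↔ (x - conv d n) * scale d n ∈ Ioc (0 : ℝ) 1 := by
  rw [← mem_Ioc_add_div_iff (by exact_mod_cast hP), zero_div, add_zero, one_div]
  rfl

lemma mem_cylinder_succ_iff (hd : ∀ i ∈ Finset.Icc 1 (n + 1), 2 ≤ d i) :
    x ∈ cylinder d (n + 1) ↔
      (x - conv d n) * scale d n ∈ Ioc (d (n + 1) : ℝ)⁻¹ ((d (n + 1) : ℝ) - 1)⁻¹ := by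
  have hP : (0 : ℝ) < scale d n := by
    exact_mod_cast scale_pos fun i hi => hd i (Finset.Icc_subset_Icc_right n.le_succ hi)
  have hdn : 2 ≤ d (n + 1) := hd (n + 1) (by simp)
  have hD : (2 : ℝ) ≤ d (n + 1) := by exact_mod_cast hdn
  set D : ℝ := (d (n + 1) : ℝ)
  set P : ℝ := (scale d n : ℝ)
  have hlo : (D * P)⁻¹ = D⁻¹ / P := by rw [mul_inv, div_eq_mul_inv]
  have hhi : (D * P)⁻¹ + (P * (D * (D - 1)))⁻¹ = (D - 1)⁻¹ / P := by
    field_simp [show D - 1 ≠ 0 by linarith]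
    ring
  rw [← mem_Ioc_add_div_iff hP, cylinder, conv_succ, denom_succ,
    cast_scale_succ (one_le_two.trans hdn), Nat.cast_mul, add_assoc, hhi, hlo]

theorem lurothD_eq_of_mem_cylinder (hd : ∀ i ∈ Finset.Icc 1 n, 2 ≤ d i)
    (hx : x ∈ cylinder d n) : x ∈ Ioc (0 : ℝ) 1 ∧ ∀ i ∈ Finset.Icc 1 n, lurothD x i = d i := by
  induction n with
  | zero => simpa [cylinder, conv, scale] using hx
  | succ n ih =>
    have hd' : ∀ i ∈ Finset.Icc 1 n, 2 ≤ d i :=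
      fun i hi => hd i (Finset.Icc_subset_Icc_right n.le_succ hi)
    have hP : (0 : ℝ) < scale d n := by exact_mod_cast scale_pos hd'
    have hD : (2 : ℝ) ≤ d (n + 1) := by exact_mod_cast hd (n + 1) (by simp)
    have hrem := (mem_cylinder_succ_iff hd).1 hx
    have hx_cyl : x ∈ cylinder d n := (mem_cylinder_iff (scale_pos hd')).2 <|
      Ioc_subset_Ioc (by positivity) (inv_le_one_of_one_le₀ (by linarith)) hrem
    obtain ⟨hx01, hdig⟩ := ih hd' hx_cyl
    have hT : lurothT^[n] x = (x - conv d n) * scale d n := by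
      have hexp := eq_conv_add_lurothT_iterate_div_scale hx01 n
      rw [conv_congr hdig, scale_congr hdig] at hexp
      exact (div_eq_iff hP.ne').1 (by linarith)
    refine ⟨hx01, fun i hi => ?_⟩
    rcases (Finset.mem_Icc.1 hi).2.lt_or_eq with hlt | rfl
    · exact hdig i (Finset.mem_Icc.2 ⟨(Finset.mem_Icc.1 hi).1, Nat.lt_succ_iff.1 hlt⟩)
    · rw [lurothD_succ, hT]
      exact lurothD_one_eq_of_mem_Ioc (hd _ hi) hrem

lemma Ioo_subset_cylinder {r : ℝ} (hn : 1 ≤ n) (hd : ∀ i ∈ Finset.Icc 1 n, 2 ≤ d i)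
    (hr : r < 1 / (denom d n : ℝ)) :
    Ioo (conv d n) (conv d n + r / denom d n) ⊆ cylinder d n := by
  have hQ : (0 : ℝ) < denom d n := by
    exact_mod_cast (Nat.one_le_two_pow).trans (two_pow_le_denom hn hd)
  have hP : (0 : ℝ) < scale d n := by exact_mod_cast scale_pos hd
  have hPQ : (scale d n : ℝ) ≤ (denom d n : ℝ) ^ 2 := by exact_mod_cast scale_le_denom_sq hn hd
  refine Ioo_subset_Ioc_self.trans (Ioc_subset_Ioc_right ((add_le_add_iff_left _).2 ?_))
  calc r / denom d n ≤ 1 / denom d n / denom d n := by gcongr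
    _ = ((denom d n : ℝ) ^ 2)⁻¹ := by rw [sq, one_div, div_eq_mul_inv, mul_inv]
    _ ≤ (scale d n : ℝ)⁻¹ := inv_anti₀ hP hPQ

def limsupIoo (ψ : ℕ → ℝ) : Set ℝ :=
  {x | ∀ Q₀ : ℕ, ∃ n : ℕ, 1 ≤ n ∧ ∃ d : ℕ → ℕ, (∀ i ∈ Finset.Icc 1 n, 2 ≤ d i) ∧
    Q₀ ≤ denom d n ∧ x ∈ Ioo (conv d n) (conv d n + ψ (denom d n) / denom d n)}

lemma Lpsi_subset_limsupIoo (ψ : ℕ → ℝ) : Lpsi ψ ⊆ limsupIoo ψ := by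
  rintro x ⟨hx01, hx⟩ Q₀
  obtain ⟨n, hQ₀n, hn, happrox⟩ := hx Q₀
  have hd : ∀ i ∈ Finset.Icc 1 n, 2 ≤ lurothD x i := fun i _ => two_le_lurothD hx01 i
  refine ⟨n, hn, lurothD x, hd, ?_, conv_lurothD_lt hx01 n, ?_⟩
  · exact (hQ₀n.trans Nat.lt_two_pow_self.le).trans (two_pow_le_denom hn hd)
  · exact sub_lt_iff_lt_add'.1 (abs_lt.1 happrox).2

lemma limsupIoo_subset_Lpsi {ψ : ℕ → ℝ} {q₀ : ℕ} (hψ : ∀ q : ℕ, q₀ < q → ψ q < 1 / (q : ℝ)) :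
    limsupIoo ψ ⊆ Lpsi ψ := by
  intro x hx
  have happrox : ∀ Q₀ : ℕ, ∃ n, 1 ≤ n ∧ Q₀ ≤ lurothQ x n ∧ x ∈ Ioc (0 : ℝ) 1 ∧
      |x - lurothConv x n| < ψ (lurothQ x n) / (lurothQ x n : ℝ) := by
    intro Q₀
    obtain ⟨n, hn, d, hd, hQ, hIoo⟩ := hx (max Q₀ (q₀ + 1))
    obtain ⟨hx01, hdig⟩ :=
      lurothD_eq_of_mem_cylinder hd (Ioo_subset_cylinder hn hd (hψ _ (by omega)) hIoo)
    have hQ_eq : lurothQ x n = denom d n := denom_congr hn hdig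
    have hconv_eq : lurothConv x n = conv d n := conv_congr hdig
    refine ⟨n, hn, by omega, hx01, ?_⟩
    rw [hQ_eq, hconv_eq, abs_of_pos (sub_pos.2 hIoo.1)]
    exact sub_lt_iff_lt_add'.2 hIoo.2
  obtain ⟨-, -, -, hx01, -⟩ := happrox 0
  refine ⟨hx01, fun N => ?_⟩
  obtain ⟨n, hn, hQ, -, hlt⟩ := happrox ((Finset.range (N + 1)).sup (lurothQ x) + 1)
  refine ⟨n, not_lt.1 fun hnN => ?_, hn, hlt⟩
  have := Finset.le_sup (f := lurothQ x) (Finset.mem_range.2 (by omega : n < N + 1))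
  omega

end Luroth

theorem stmt16 (ψ : ℕ → ℝ) (hψ : ∀ q, ψ q ∈ Set.Ioc (0:ℝ) 1)
    (h : 1 < liminf (fun q : ℕ => -Real.log (ψ q) / Real.log q) atTop) :
    (∃ q₀ : ℕ, ∀ q : ℕ, q₀ < q → ψ q < 1 / (q : ℝ)) ∧
    Lpsi ψ = {x : ℝ | ∀ Q₀ : ℕ, ∃ n : ℕ, 1 ≤ n ∧ ∃ d : ℕ → ℕ,
      (∀ i ∈ Finset.Icc 1 n, 2 ≤ d i) ∧
      Q₀ ≤ d n * ∏ j ∈ Finset.Ico 1 n, d j * (d j - 1) ∧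
      x ∈ Set.Ioo
        (∑ k ∈ Finset.Icc 1 n,
          ((d k * ∏ j ∈ Finset.Ico 1 k, d j * (d j - 1) : ℕ) : ℝ)⁻¹)
        ((∑ k ∈ Finset.Icc 1 n,
          ((d k * ∏ j ∈ Finset.Ico 1 k, d j * (d j - 1) : ℕ) : ℝ)⁻¹) +
          ψ (d n * ∏ j ∈ Finset.Ico 1 n, d j * (d j - 1)) /
            ((d n * ∏ j ∈ Finset.Ico 1 n, d j * (d j - 1) : ℕ) : ℝ))} := by
  obtain ⟨q₀, hq₀⟩ := eventually_atTop.1 (eventually_lt_one_div_of_one_lt_liminf hψ h)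
  have hψ_small : ∀ q : ℕ, q₀ < q → ψ q < 1 / (q : ℝ) := fun q hq => hq₀ q hq.le
  exact ⟨⟨q₀, hψ_small⟩,
    (Luroth.Lpsi_subset_limsupIoo ψ).antisymm (Luroth.limsupIoo_subset_Lpsi hψ_small)⟩
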